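/- arXiv:2201.00490 — 2 statements merged into one kernel-verified Lean document; each statement's English description precedes it below -/
import Mathlib

section
/- Gumbel-Max trick (general case): let s₁,…,s_n ∈ ℝ and γ₁,…,γ_n be i.i.d. standard Gumbel random variables (γ_i = -log(-log U_i) with U_i i.i.d. Uniform(0,1)). Then for each k, P(argmax_i (s_i + γ_i) = k) = exp(s_k)/∑_{i=1}^n exp(s_i), and the argmax is almost surely unique. -/
/-!
Pushing the noise vector forward, independence turns the law of `γ` into the product of copies
of one Gumbel law `μ`. Integrating out coordinate `k` last, the argmax event has probability
`∫ ∏_{i ≠ k} F(s_k - s_i + t) dμ(t)`, and the Gumbel CDF satisfies `F(t + a) = F(t) ^ exp(-a)`,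
so the integrand is `F(t) ^ c` with `c = ∑_{i ≠ k} exp(s_i - s_k)`. Realising `μ` as the image
of the uniform law on `(0, 1)` under the quantile function `F⁻¹`, this integral becomes
`∫₀¹ u ^ c du = 1 / (1 + c)`, the softmax weight. Ties have probability zero because `μ` has
no atoms.
-/

open MeasureTheory ProbabilityTheory

theorem measurableSet_setOf_forall_ne_add_lt {ι : Type*} [Countable ι] (s : ι → ℝ) (k : ι) :
    MeasurableSet {x : ι → ℝ | ∀ i, i ≠ k → s i + x i < s k + x k} := by
  simp only [Set.ofPred_forall]
  exact .iInter fun i => .iInter fun _ => measurableSet_lt (by fun_prop) (by fun_prop)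

section ProductSlices

variable {ι : Type*} [Fintype ι] [DecidableEq ι]

theorem MeasureTheory.Measure.pi_eq_lintegral_pi_ne {α : Type*} [MeasurableSpace α]
    (μ : Measure α) [IsProbabilityMeasure μ] (k : ι) {S : Set (ι → α)} (hS : MeasurableSet S) :
    Measure.pi (fun _ : ι => μ) S = ∫⁻ t, Measure.pi (fun _ : {i // i ≠ k} => μ)
      {y | (fun i => if h : i ≠ k then y ⟨i, h⟩ else t) ∈ S} ∂μ := by
  set e := MeasurableEquiv.piEquivPiSubtypeProd (fun _ : ι => α) (· ≠ k)
  set B := e.symm ⁻¹' S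
  have hB : MeasurableSet B := e.symm.measurable hS
  have hslice : Measurable fun t : α => Measure.pi (fun _ : {i // i ≠ k} => μ)
      ((fun y => (y, fun _ => t)) ⁻¹' B) :=
    (measurable_measure_prodMk_right hB).comp (measurable_pi_lambda _ fun _ => measurable_id)
  have hk : ¬k ≠ k := not_not.2 rfl
  calc Measure.pi (fun _ : ι => μ) S = Measure.pi (fun _ : ι => μ) (e ⁻¹' B) := by
        congr 1
        exact (e.preimage_symm_preimage S).symm
    _ = ∫⁻ f, Measure.pi (fun _ : {i // i ≠ k} => μ) ((fun y => (y, f)) ⁻¹' B)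
          ∂Measure.pi (fun _ : {i // ¬i ≠ k} => μ) := by
        rw [(measurePreserving_piEquivPiSubtypeProd (fun _ => μ) (· ≠ k)).measure_preimage_equiv,
          Measure.prod_apply_symm hB]
    _ = _ := by
        refine (lintegral_congr fun f => ?_).trans
          ((measurePreserving_eval (fun _ : {i // ¬i ≠ k} => μ) ⟨k, hk⟩).lintegral_comp hslice)
        have hf : f = fun _ => f ⟨k, hk⟩ := funext fun ⟨i, hi⟩ => by
          obtain rfl := not_not.1 hi
          rfl
        rw [hf]
        rfl

variable (μ : Measure ℝ) [IsProbabilityMeasure μ]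

theorem measure_pi_setOf_forall_ne_add_lt (s : ι → ℝ) (k : ι) :
    Measure.pi (fun _ : ι => μ) {x | ∀ i, i ≠ k → s i + x i < s k + x k} =
      ∫⁻ t, ∏ j : {i // i ≠ k}, μ (Set.Iio (s k + t - s j)) ∂μ := by
  rw [Measure.pi_eq_lintegral_pi_ne μ k (measurableSet_setOf_forall_ne_add_lt s k)]
  refine lintegral_congr fun t => ?_
  rw [← Measure.pi_pi]
  congr 1
  ext y
  simp only [Set.mem_ofPred_eq, Set.mem_pi, Set.mem_univ, Set.mem_Iio, true_implies,
    Subtype.forall]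
  refine forall₂_congr fun i hi => ?_
  rw [dif_pos hi, dif_neg (not_not.2 rfl), lt_sub_iff_add_lt']

theorem measure_pi_setOf_add_eq_add [NullSingletonClass μ] (s : ι → ℝ) {i j : ι} (hij : i ≠ j) :
    Measure.pi (fun _ : ι => μ) {x | s i + x i = s j + x j} = 0 := by
  rw [Measure.pi_eq_lintegral_pi_ne μ j (measurableSet_eq_fun (by fun_prop) (by fun_prop))]
  refine (lintegral_congr fun t => measure_mono_null (fun y hy => ?_)
    (Measure.pi_eval_preimage_null _ (i := ⟨i, hij⟩) (measure_singleton (s j + t - s i)))).trans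
    lintegral_zero
  simp only [Set.mem_ofPred_eq, dif_pos hij, dif_neg (not_not.2 rfl)] at hy
  exact eq_sub_of_add_eq' hy

theorem measure_pi_setOf_exists_ne_add_eq_add [NullSingletonClass μ] (s : ι → ℝ) :
    Measure.pi (fun _ : ι => μ) {x | ∃ i j, i ≠ j ∧ s i + x i = s j + x j} = 0 := by
  simp only [Set.ofPred_exists, Set.ofPred_and, measure_iUnion_null_iff]
  intro i j
  by_cases hij : i = j
  · simp [hij]
  exact measure_mono_null Set.inter_subset_right (measure_pi_setOf_add_eq_add μ s hij)

end ProductSlices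

noncomputable def gumbelCDF (x : ℝ) : ℝ := Real.exp (-Real.exp (-x))

noncomputable def gumbelQuantile (u : ℝ) : ℝ := -Real.log (-Real.log u)

noncomputable def gumbelMeasure : Measure ℝ :=
  (volume.restrict (Set.Ioo 0 1)).map gumbelQuantile

theorem gumbelCDF_pos (x : ℝ) : 0 < gumbelCDF x := Real.exp_pos _

theorem gumbelCDF_lt_one (x : ℝ) : gumbelCDF x < 1 :=
  Real.exp_lt_one_iff.2 (neg_neg_iff_pos.2 (Real.exp_pos _))

theorem strictMono_gumbelCDF : StrictMono gumbelCDF := fun _ _ h =>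
  Real.exp_lt_exp.2 (neg_lt_neg (Real.exp_lt_exp.2 (neg_lt_neg h)))

theorem gumbelCDF_add (t a : ℝ) : gumbelCDF (t + a) = gumbelCDF t ^ Real.exp (-a) := by
  rw [Real.rpow_def_of_pos (gumbelCDF_pos t), gumbelCDF, gumbelCDF, Real.log_exp, neg_add,
    Real.exp_add]
  ring_nf

theorem gumbelCDF_gumbelQuantile {u : ℝ} (hu : u ∈ Set.Ioo 0 1) :
    gumbelCDF (gumbelQuantile u) = u := by
  rw [gumbelCDF, gumbelQuantile, neg_neg, Real.exp_log (neg_pos.2 (Real.log_neg hu.1 hu.2)),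
    neg_neg, Real.exp_log hu.1]

theorem measurable_gumbelQuantile : Measurable gumbelQuantile :=
  (Real.measurable_log.comp Real.measurable_log.neg).neg

theorem gumbelMeasure_Iic (x : ℝ) :
    gumbelMeasure (Set.Iic x) = ENNReal.ofReal (gumbelCDF x) := by
  have hpre : gumbelQuantile ⁻¹' Set.Iic x ∩ Set.Ioo 0 1 = Set.Ioc 0 (gumbelCDF x) := by
    ext u
    refine ⟨fun ⟨hux, hu⟩ => ⟨hu.1, ?_⟩, fun hu => ?_⟩
    · rw [← gumbelCDF_gumbelQuantile hu]
      exact strictMono_gumbelCDF.monotone hux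
    · have hu' : u ∈ Set.Ioo 0 1 := ⟨hu.1, hu.2.trans_lt (gumbelCDF_lt_one x)⟩
      refine ⟨?_, hu'⟩
      rw [Set.mem_preimage, Set.mem_Iic, ← strictMono_gumbelCDF.le_iff_le,
        gumbelCDF_gumbelQuantile hu']
      exact hu.2
  rw [gumbelMeasure, Measure.map_apply measurable_gumbelQuantile measurableSet_Iic,
    Measure.restrict_apply (measurable_gumbelQuantile measurableSet_Iic), hpre, Real.volume_Ioc,
    sub_zero]

instance : IsProbabilityMeasure gumbelMeasure :=
  have : IsProbabilityMeasure (volume.restrict (Set.Ioo (0 : ℝ) 1)) := ⟨by simp⟩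
  Measure.isProbabilityMeasure_map measurable_gumbelQuantile.aemeasurable

instance : NullSingletonClass gumbelMeasure where
  measure_singleton v := by
    rw [gumbelMeasure, Measure.map_apply measurable_gumbelQuantile (measurableSet_singleton v),
      Measure.restrict_apply (measurable_gumbelQuantile (measurableSet_singleton v))]
    refine measure_mono_null (fun u ⟨huv, hu⟩ => ?_) (measure_singleton (gumbelCDF v))
    rw [Set.mem_singleton_iff, ← gumbelCDF_gumbelQuantile hu, Set.mem_singleton_iff.1 huv]

theorem gumbelMeasure_Iio (x : ℝ) :
    gumbelMeasure (Set.Iio x) = ENNReal.ofReal (gumbelCDF x) := by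
  rw [measure_congr (Iio_ae_eq_Iic' (measure_singleton x)), gumbelMeasure_Iic]

theorem eq_gumbelMeasure (μ : Measure ℝ) [IsProbabilityMeasure μ]
    (h : ∀ x, μ (Set.Iic x) = ENNReal.ofReal (gumbelCDF x)) : μ = gumbelMeasure :=
  Measure.ext_of_Iic μ gumbelMeasure fun x => by rw [h, gumbelMeasure_Iic]

theorem lintegral_ofReal_rpow_Ioo_zero_one {c : ℝ} (hc : -1 < c) :
    ∫⁻ u in Set.Ioo 0 1, ENNReal.ofReal (u ^ c) = ENNReal.ofReal (c + 1)⁻¹ := by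
  have hint : IntegrableOn (fun u : ℝ => u ^ c) (Set.Ioc 0 1) := by
    simpa [intervalIntegrable_iff, Set.uIoc_of_le zero_le_one] using
      intervalIntegral.intervalIntegrable_rpow' (a := 0) (b := 1) hc
  rw [← ofReal_integral_eq_lintegral_ofReal (hint.mono_set Set.Ioo_subset_Ioc_self)
    ((ae_restrict_mem measurableSet_Ioo).mono fun u hu => Real.rpow_nonneg hu.1.le c),
    ← integral_Ioc_eq_integral_Ioo, ← intervalIntegral.integral_of_le zero_le_one,
    integral_rpow (Or.inl hc), Real.one_rpow, Real.zero_rpow (by linarith), sub_zero, one_div]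

theorem lintegral_gumbelCDF_rpow {c : ℝ} (hc : -1 < c) :
    ∫⁻ t, ENNReal.ofReal (gumbelCDF t ^ c) ∂gumbelMeasure = ENNReal.ofReal (c + 1)⁻¹ := by
  rw [gumbelMeasure, lintegral_map
    (strictMono_gumbelCDF.monotone.measurable.pow_const c).ennreal_ofReal measurable_gumbelQuantile,
    ← lintegral_ofReal_rpow_Ioo_zero_one hc]
  exact setLIntegral_congr_fun measurableSet_Ioo fun u hu => by rw [gumbelCDF_gumbelQuantile hu]

theorem gumbelMeasure_pi_setOf_forall_ne_add_lt {ι : Type*} [Fintype ι] [DecidableEq ι]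
    (s : ι → ℝ) (k : ι) :
    Measure.pi (fun _ : ι => gumbelMeasure) {x | ∀ i, i ≠ k → s i + x i < s k + x k} =
      ENNReal.ofReal (Real.exp (s k) / ∑ i, Real.exp (s i)) := by
  set c := ∑ j : {i // i ≠ k}, Real.exp (s j - s k)
  have hc : 0 ≤ c := Finset.sum_nonneg fun _ _ => (Real.exp_pos _).le
  have hprod : ∀ t, ∏ j : {i // i ≠ k}, gumbelMeasure (Set.Iio (s k + t - s j)) =
      ENNReal.ofReal (gumbelCDF t ^ c) := fun t => by
    have hshift : ∀ j : {i // i ≠ k},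
        gumbelCDF (s k + t - s j) = gumbelCDF t ^ Real.exp (s j - s k) := fun j => by
      rw [← neg_sub (s k), ← gumbelCDF_add]
      congr 1
      ring
    simp_rw [gumbelMeasure_Iio, hshift]
    rw [← ENNReal.ofReal_prod_of_nonneg fun _ _ => (Real.rpow_pos_of_pos (gumbelCDF_pos t) _).le,
      ← Real.rpow_sum_of_pos (gumbelCDF_pos t)]
  have hsum : ∑ i, Real.exp (s i) = Real.exp (s k) * (c + 1) := by
    rw [Fintype.sum_eq_add_sum_subtype_ne _ k, mul_add, mul_one, Finset.mul_sum, add_comm]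
    simp_rw [← Real.exp_add, add_sub_cancel]
  rw [measure_pi_setOf_forall_ne_add_lt, lintegral_congr hprod,
    lintegral_gumbelCDF_rpow (by linarith), hsum, div_mul_cancel_left₀ (Real.exp_pos _).ne']

theorem gumbel_max_general_general
    {Ω : Type*} [MeasurableSpace Ω] (P : Measure Ω) [IsProbabilityMeasure P]
    (n : ℕ) (s : Fin n → ℝ) (γ : Fin n → Ω → ℝ)
    (hmeas : ∀ i, Measurable (γ i))
    (hindep : iIndepFun γ P)
    (hgumbel : ∀ i x, Measure.map (γ i) P (Set.Iic x) =
      ENNReal.ofReal (Real.exp (-Real.exp (-x)))) :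
    (∀ k, P {ω | ∀ i, i ≠ k → s i + γ i ω < s k + γ k ω} =
        ENNReal.ofReal (Real.exp (s k) / ∑ i, Real.exp (s i))) ∧
    P {ω | ∃ i j, i ≠ j ∧ s i + γ i ω = s j + γ j ω} = 0 := by
  have hγ : Measurable fun ω i => γ i ω := measurable_pi_lambda _ hmeas
  have hlaw : P.map (fun ω i => γ i ω) = Measure.pi fun _ => gumbelMeasure := by
    rw [(iIndepFun_iff_map_fun_eq_pi_map fun i => (hmeas i).aemeasurable).1 hindep]
    congr with i : 1
    have := Measure.isProbabilityMeasure_map (hmeas i).aemeasurable (μ := P)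
    exact eq_gumbelMeasure _ (hgumbel i)
  refine ⟨fun k => ?_, ?_⟩
  · rw [← gumbelMeasure_pi_setOf_forall_ne_add_lt s k, ← hlaw,
      Measure.map_apply hγ (measurableSet_setOf_forall_ne_add_lt s k)]
    rfl
  · refine nonpos_iff_eq_zero.1 ((Measure.le_map_apply hγ.aemeasurable
      {x | ∃ i j, i ≠ j ∧ s i + x i = s j + x j}).trans_eq ?_)
    rw [hlaw, measure_pi_setOf_exists_ne_add_eq_add]

/-- Gumbel-Max trick, general case: with i.i.d. standard Gumbel noise γᵢ
(CDF exp(-exp(-x))), the index maximizing sᵢ + γᵢ follows the softmax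
distribution, and the argmax is almost surely unique. -/
theorem gumbel_max_general
    {Ω : Type*} [MeasurableSpace Ω] (P : Measure Ω) [IsProbabilityMeasure P]
    (n : ℕ) (hn : 0 < n) (s : Fin n → ℝ) (γ : Fin n → Ω → ℝ)
    (hmeas : ∀ i, Measurable (γ i))
    (hindep : iIndepFun γ P)
    (hgumbel : ∀ i x, Measure.map (γ i) P (Set.Iic x) =
      ENNReal.ofReal (Real.exp (-Real.exp (-x)))) :
    (∀ k, P {ω | ∀ i, i ≠ k → s i + γ i ω < s k + γ k ω} =
        ENNReal.ofReal (Real.exp (s k) / ∑ i, Real.exp (s i))) ∧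
    P {ω | ∃ i j, i ≠ j ∧ s i + γ i ω = s j + γ j ω} = 0 :=
  gumbel_max_general_general P n s γ hmeas hindep hgumbel
end

section
/- sparsemax recovers argmax in the limit of large scores: for s ∈ ℝ^n with a unique maximal coordinate k, there exists T > 0 such that for all t ≥ T, sparsemax(t·s) = e_k, the k-th standard basis vector. -/
/-! With `δ` the least gap `s k - s i` and `m = 1 - p k` the mass a maximizer `p` puts off `k`,
comparing the objective at `p` with its value at `e_k` gives `t δ m ≤ m - m² / 2`, because
`⟪p, s⟫ ≤ s k - δ m` and `‖p‖² ≥ (1 - m)²`. Hence `m = 0` as soon as `t δ > 1`. -/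

open Finset

/-- The probability simplex inside Euclidean space. -/
def esimplex (n : ℕ) : Set (EuclideanSpace ℝ (Fin n)) :=
  {z | (∀ i, 0 ≤ z i) ∧ ∑ i, z i = 1}

section Simplex

variable {ι : Type*} {k : ι}

lemma exists_pos_add_le_of_forall_ne_lt [Finite ι] {s : ι → ℝ} (hk : ∀ i, i ≠ k → s i < s k) :
    ∃ δ > 0, ∀ i, i ≠ k → s i + δ ≤ s k := by
  classical
  have : Nonempty ι := ⟨k⟩
  obtain ⟨i₀, hi₀⟩ := Finite.exists_min fun i => if i = k then 1 else s k - s i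
  refine ⟨if i₀ = k then 1 else s k - s i₀, ?_, fun i hi => ?_⟩
  · split_ifs with h
    · exact one_pos
    · exact sub_pos.2 (hk i₀ h)
  · have := hi₀ i
    rw [if_neg hi] at this
    linarith

lemma sum_mul_le_of_mem_stdSimplex [Fintype ι] {w s : ι → ℝ} {δ : ℝ} (hw : w ∈ stdSimplex ℝ ι)
    (hgap : ∀ i, i ≠ k → s i + δ ≤ s k) :
    ∑ i, w i * s i ≤ s k - δ * (1 - w k) := by
  classical
  calc ∑ i, w i * s i = w k * s k + ∑ i ∈ univ.erase k, w i * s i :=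
        (add_sum_erase _ _ (mem_univ k)).symm
    _ ≤ w k * s k + ∑ i ∈ univ.erase k, w i * (s k - δ) := by
        gcongr with i hi
        · exact hw.1 i
        · linarith [hgap i (ne_of_mem_erase hi)]
    _ = w k * s k + (1 - w k) * (s k - δ) := by
        rw [← sum_mul, sum_erase_eq_sub (mem_univ k), hw.2]
    _ = s k - δ * (1 - w k) := by ring

lemma eq_single_of_mem_stdSimplex_of_apply_eq_one [Fintype ι] [DecidableEq ι] {w : ι → ℝ}
    (hw : w ∈ stdSimplex ℝ ι) (hk : w k = 1) : w = Pi.single k 1 := by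
  have hrest : ∑ i ∈ univ.erase k, w i = 0 := by
    rw [sum_erase_eq_sub (mem_univ k), hw.2, hk, sub_self]
  funext i
  rcases eq_or_ne i k with rfl | hi
  · simp [hk]
  · rw [Pi.single_eq_of_ne hi]
    exact (sum_eq_zero_iff_of_nonneg fun j _ => hw.1 j).1 hrest i
      (mem_erase.2 ⟨hi, mem_univ i⟩)

lemma apply_eq_one_of_objective_single_le [Fintype ι] {w s : ι → ℝ} {δ t : ℝ}
    (hw : w ∈ stdSimplex ℝ ι) (hgap : ∀ i, i ≠ k → s i + δ ≤ s k) (ht : 0 ≤ t) (htδ : 1 < t * δ)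
    (hle : t * s k - 1 / 2 ≤ t * ∑ i, w i * s i - 1 / 2 * ∑ i, w i ^ 2) :
    w k = 1 := by
  have hlin := mul_le_mul_of_nonneg_left (sum_mul_le_of_mem_stdSimplex hw hgap) ht
  have hsq : w k ^ 2 ≤ ∑ i, w i ^ 2 :=
    single_le_sum (f := fun i => w i ^ 2) (fun i _ => sq_nonneg _) (mem_univ k)
  have hwk := mem_Icc_of_mem_stdSimplex hw k
  nlinarith [hwk.1, hwk.2]

end Simplex

lemma inner_smul_sub_half_norm_sq {ι : Type*} [Fintype ι] (z s : EuclideanSpace ℝ ι) (t : ℝ) :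
    inner ℝ z (t • s) - 1 / 2 * ‖z‖ ^ 2 = t * ∑ i, z i * s i - 1 / 2 * ∑ i, z i ^ 2 := by
  simp [PiLp.inner_apply, EuclideanSpace.real_norm_sq_eq, mul_sum, mul_comm, mul_left_comm]

/-- sparsemax recovers argmax in the limit of large scores: if coordinate k of s
is the strict unique maximum, then for all sufficiently large t the (unique)
maximizer of z ↦ ⟨z, t•s⟩ - ½‖z‖² over the simplex is the one-hot vector eₖ. -/
theorem sparsemax_recovers_argmax {n : ℕ} (s : EuclideanSpace ℝ (Fin n))
    (k : Fin n) (hk : ∀ i, i ≠ k → s i < s k) :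
    ∃ T > (0:ℝ), ∀ t ≥ T, ∀ p ∈ esimplex n,
      (∀ z ∈ esimplex n,
        inner ℝ z (t • s) - (1/2) * ‖z‖^2 ≤ inner ℝ p (t • s) - (1/2) * ‖p‖^2 : Prop) →
      p = (EuclideanSpace.single k (1:ℝ)) := by
  obtain ⟨δ, hδ, hgap⟩ := exists_pos_add_le_of_forall_ne_lt hk
  refine ⟨2 / δ, by positivity, fun t ht p hp hmax => ?_⟩
  have ht0 : 0 ≤ t := le_trans (by positivity) ht
  have htδ : 1 < t * δ := by
    rw [ge_iff_le, div_le_iff₀ hδ] at ht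
    linarith
  have hle := hmax (EuclideanSpace.single k 1) (single_mem_stdSimplex ℝ k)
  rw [inner_smul_sub_half_norm_sq, inner_smul_sub_half_norm_sq] at hle
  have hpk := apply_eq_one_of_objective_single_le hp hgap ht0 htδ (by simpa using hle)
  exact congrArg (WithLp.toLp 2) (eq_single_of_mem_stdSimplex_of_apply_eq_one hp hpk)
end
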